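/- arXiv:1311.5862 — 2 statements merged into one kernel-verified Lean document; each statement's English description precedes it below -/
import Mathlib

section
/- The vertex Frenet frame of a discrete curve is orthonormal and positively oriented: for every i ∈ ℤ, the vectors Tᵛᵢ, Nᵛᵢ, Bᵛᵢ are pairwise orthogonal unit vectors in ℝ³ with Nᵛᵢ = Bᵛᵢ × Tᵛᵢ, so that the 3×3 matrix with columns Tᵛᵢ, Nᵛᵢ, Bᵛᵢ has determinant 1. -/
open RealInnerProductSpace

noncomputable section

/-- Points of a discrete curve live in `ℝ³` with the Euclidean norm. -/
abbrev E3 := EuclideanSpace ℝ (Fin 3)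

/-- The cross product on `ℝ³`. -/
def cross3 (u v : E3) : E3 :=
  WithLp.toLp 2 ![u 1 * v 2 - u 2 * v 1, u 2 * v 0 - u 0 * v 2, u 0 * v 1 - u 1 * v 0]

/-!
At an even vertex the two adjacent edges share their binormal; at an odd vertex the midpoint
condition makes them share their tangent. Since every edge binormal is orthogonal to its own
edge tangent, the shared vector makes the sums `MB` and `MT` orthogonal, and `2 • MN = MB × MT` by
bilinearity. Normalizing, the vertex frame is `(t, b × t, b)` for orthogonal unit vectors `t, b`,
which is orthonormal with determinant `‖b × t‖² = 1`.
-/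

open Matrix WithLp InnerProductGeometry

lemma cross3_eq_toLp_crossProduct (u v : E3) : cross3 u v = toLp 2 (ofLp u ⨯₃ ofLp v) := rfl

lemma cross3_add_left (u v w : E3) : cross3 (u + v) w = cross3 u w + cross3 v w := by
  simp [cross3_eq_toLp_crossProduct]

lemma cross3_add_right (u v w : E3) : cross3 u (v + w) = cross3 u v + cross3 u w := by
  simp [cross3_eq_toLp_crossProduct]

lemma cross3_smul_left (a : ℝ) (u v : E3) : cross3 (a • u) v = a • cross3 u v := by
  simp [cross3_eq_toLp_crossProduct]

lemma cross3_smul_right (a : ℝ) (u v : E3) : cross3 u (a • v) = a • cross3 u v := by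
  simp [cross3_eq_toLp_crossProduct]

lemma inner_self_cross3 (u v : E3) : ⟪u, cross3 u v⟫ = 0 := by
  simp [cross3_eq_toLp_crossProduct, EuclideanSpace.inner_eq_star_dotProduct, dotProduct_comm,
    dot_self_cross]

lemma inner_cross3_self (u v : E3) : ⟪v, cross3 u v⟫ = 0 := by
  simp [cross3_eq_toLp_crossProduct, EuclideanSpace.inner_eq_star_dotProduct, dotProduct_comm,
    dot_cross_self]

lemma norm_cross3_of_inner_eq_zero {u v : E3} (h : ⟪u, v⟫ = 0) :
    ‖cross3 u v‖ = ‖u‖ * ‖v‖ := by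
  rw [cross3_eq_toLp_crossProduct, norm_ofLp_crossProduct,
    (inner_eq_zero_iff_angle_eq_pi_div_two u v).mp h, Real.sin_pi_div_two, mul_one]

lemma det_of_cols_eq_inner_cross3 (t n b : E3) :
    (Matrix.of fun r c : Fin 3 => (![t, n, b] c) r).det = ⟪n, cross3 b t⟫ := by
  have hrows : (Matrix.of fun r c : Fin 3 => (![t, n, b] c) r)ᵀ = ![ofLp t, ofLp n, ofLp b] := by
    ext r c; fin_cases r <;> rfl
  rw [← det_transpose, hrows, ← triple_product_eq_det, triple_product_permutation,
    cross3_eq_toLp_crossProduct, EuclideanSpace.inner_eq_star_dotProduct]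
  simp [dotProduct_comm]

lemma inv_norm_smul_smul_of_pos {V : Type*} [NormedAddCommGroup V] [NormedSpace ℝ V]
    {c : ℝ} (hc : 0 < c) (x : V) : ‖c • x‖⁻¹ • c • x = ‖x‖⁻¹ • x := by
  rw [norm_smul, Real.norm_of_nonneg hc.le, smul_smul, mul_inv, mul_right_comm,
    inv_mul_cancel₀ hc.ne', one_mul]

lemma inv_norm_smul_cross3 {u v : E3} (h : ⟪u, v⟫ = 0) :
    ‖cross3 u v‖⁻¹ • cross3 u v = cross3 (‖u‖⁻¹ • u) (‖v‖⁻¹ • v) := by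
  rw [norm_cross3_of_inner_eq_zero h, cross3_smul_left, cross3_smul_right, smul_smul, mul_inv]

lemma orthonormal_of_cross3 {t n b : E3} (ht : ‖t‖ = 1) (hb : ‖b‖ = 1) (htb : ⟪t, b⟫ = 0)
    (hn : n = cross3 b t) :
    ‖t‖ = 1 ∧ ‖n‖ = 1 ∧ ‖b‖ = 1 ∧ ⟪t, n⟫ = 0 ∧ ⟪t, b⟫ = 0 ∧ ⟪n, b⟫ = 0 ∧
      n = cross3 b t ∧ (Matrix.of fun r c : Fin 3 => (![t, n, b] c) r).det = 1 := by
  subst hn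
  have hn : ‖cross3 b t‖ = 1 := by
    rw [norm_cross3_of_inner_eq_zero (real_inner_comm t b ▸ htb), hb, ht, one_mul]
  refine ⟨ht, hn, hb, inner_cross3_self b t, htb, ?_, rfl, ?_⟩
  · rw [real_inner_comm]; exact inner_self_cross3 b t
  · rw [det_of_cols_eq_inner_cross3, real_inner_self_eq_norm_sq, hn, one_pow]

lemma inner_add_add_eq_zero_of_eq_or_eq {V : Type*} [NormedAddCommGroup V]
    [InnerProductSpace ℝ V] {b b' t t' : V} (hbt : ⟪b, t⟫ = 0) (hbt' : ⟪b', t'⟫ = 0)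
    (h : b' = b ∨ t' = t) :
    ⟪b' + b, t' + t⟫ = 0 := by
  rcases h with rfl | rfl <;> simp only [inner_add_left, inner_add_right, hbt, hbt', add_zero]

lemma two_smul_cross3_add_cross3_of_eq_or_eq {b b' t t' : E3} (h : b' = b ∨ t' = t) :
    (2 : ℝ) • (cross3 b' t' + cross3 b t) = cross3 (b' + b) (t' + t) := by
  rcases h with rfl | rfl
  · rw [cross3_add_left, cross3_add_right, two_smul]
  · rw [cross3_add_right, cross3_add_left, two_smul]

section EdgeFrame

variable {γ T B : ℤ → E3}

lemma sub_eq_sub_of_midpoint {V : Type*} [AddCommGroup V] [Module ℝ V] {x y z : V}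
    (h : y = (2 : ℝ)⁻¹ • (z + x)) : z - y = y - x := by
  rw [h]; module

lemma edge_tangent_succ_of_odd
    (hmid : ∀ i : ℤ, Even i → γ i = (2 : ℝ)⁻¹ • (γ (i + 1) + γ (i - 1)))
    (hT : ∀ i : ℤ, T i = γ (i + 1) - γ i) {i : ℤ} (hi : Odd i) : T (i + 1) = T i := by
  rw [hT, hT]
  simpa using sub_eq_sub_of_midpoint (hmid (i + 1) hi.add_one)

lemma inner_edge_binormal_tangent
    (hBeven : ∀ i : ℤ, Even i →
      B i = ‖cross3 (T i) (T (i + 1))‖⁻¹ • cross3 (T i) (T (i + 1)))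
    (hBodd : ∀ i : ℤ, Odd i → B i = B (i - 1)) (i : ℤ) : ⟪B i, T i⟫ = 0 := by
  rcases Int.even_or_odd i with hi | hi
  · rw [hBeven i hi, real_inner_smul_left, real_inner_comm, inner_self_cross3, mul_zero]
  · have hB := hBeven (i - 1) (by simpa using hi.sub_odd odd_one)
    rw [hBodd i hi, hB, real_inner_smul_left, real_inner_comm, sub_add_cancel, inner_cross3_self,
      mul_zero]

lemma edge_binormal_succ_eq_or_edge_tangent_succ_eq
    (hmid : ∀ i : ℤ, Even i → γ i = (2 : ℝ)⁻¹ • (γ (i + 1) + γ (i - 1)))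
    (hT : ∀ i : ℤ, T i = γ (i + 1) - γ i) (hBodd : ∀ i : ℤ, Odd i → B i = B (i - 1)) (i : ℤ) :
    B (i + 1) = B i ∨ T (i + 1) = T i := by
  rcases Int.even_or_odd i with hi | hi
  · exact .inl (by simpa using hBodd (i + 1) hi.add_one)
  · exact .inr (edge_tangent_succ_of_odd hmid hT hi)

end EdgeFrame

theorem vertex_frame_orthonormal_positively_oriented_general
    (γ T N B : ℤ → E3)
    (hmid : ∀ i : ℤ, Even i → γ i = (2 : ℝ)⁻¹ • (γ (i + 1) + γ (i - 1)))
    (hT : ∀ i : ℤ, T i = γ (i + 1) - γ i)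
    (hBeven : ∀ i : ℤ, Even i →
      B i = ‖cross3 (T i) (T (i + 1))‖⁻¹ • cross3 (T i) (T (i + 1)))
    (hBodd : ∀ i : ℤ, Odd i → B i = B (i - 1))
    (hN : ∀ i : ℤ, N i = cross3 (B i) (T i))
    (Tv Nv Bv : ℤ → E3)
    (hMT : ∀ i : ℤ, T (i + 1) + T i ≠ 0)
    (hMB : ∀ i : ℤ, B (i + 1) + B i ≠ 0)
    (hTv : ∀ i : ℤ, Tv i = ‖T (i + 1) + T i‖⁻¹ • (T (i + 1) + T i))
    (hNv : ∀ i : ℤ, Nv i = ‖N (i + 1) + N i‖⁻¹ • (N (i + 1) + N i))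
    (hBv : ∀ i : ℤ, Bv i = ‖B (i + 1) + B i‖⁻¹ • (B (i + 1) + B i))
    : ∀ i : ℤ,
      ‖Tv i‖ = 1 ∧ ‖Nv i‖ = 1 ∧ ‖Bv i‖ = 1 ∧
      ⟪Tv i, Nv i⟫ = 0 ∧ ⟪Tv i, Bv i⟫ = 0 ∧ ⟪Nv i, Bv i⟫ = 0 ∧
      Nv i = cross3 (Bv i) (Tv i) ∧
      (Matrix.of fun r c : Fin 3 => (![Tv i, Nv i, Bv i] c) r).det = 1 := by
  intro i
  have hsucc := edge_binormal_succ_eq_or_edge_tangent_succ_eq hmid hT hBodd i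
  have hMBT : ⟪B (i + 1) + B i, T (i + 1) + T i⟫ = 0 := inner_add_add_eq_zero_of_eq_or_eq
    (inner_edge_binormal_tangent hBeven hBodd i) (inner_edge_binormal_tangent hBeven hBodd (i + 1))
    hsucc
  have hTB : ⟪Tv i, Bv i⟫ = 0 := by
    rw [hTv, hBv, real_inner_smul_left, real_inner_smul_right, real_inner_comm, hMBT, mul_zero,
      mul_zero]
  have hNTB : Nv i = cross3 (Bv i) (Tv i) := by
    rw [hNv, hN, hN, ← inv_norm_smul_smul_of_pos two_pos,
      two_smul_cross3_add_cross3_of_eq_or_eq hsucc, inv_norm_smul_cross3 hMBT, hTv, hBv]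
  exact orthonormal_of_cross3 (by rw [hTv]; exact norm_smul_inv_norm (hMT i))
    (by rw [hBv]; exact norm_smul_inv_norm (hMB i)) hTB hNTB

/-- The vertex Frenet frame of a discrete curve is orthonormal and positively oriented. -/
theorem vertex_frame_orthonormal_positively_oriented
    (γ T N B : ℤ → E3)
    (hlen : ∀ i : ℤ, ‖γ (i + 1) - γ i‖ = 1)
    (hmid : ∀ i : ℤ, Even i → γ i = (2 : ℝ)⁻¹ • (γ (i + 1) + γ (i - 1)))
    (hT : ∀ i : ℤ, T i = γ (i + 1) - γ i)
    (hcross : ∀ i : ℤ, Even i → cross3 (T i) (T (i + 1)) ≠ 0)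
    (hBeven : ∀ i : ℤ, Even i →
      B i = ‖cross3 (T i) (T (i + 1))‖⁻¹ • cross3 (T i) (T (i + 1)))
    (hBodd : ∀ i : ℤ, Odd i → B i = B (i - 1))
    (hN : ∀ i : ℤ, N i = cross3 (B i) (T i))
    (Tv Nv Bv : ℤ → E3)
    (hMT : ∀ i : ℤ, T (i + 1) + T i ≠ 0)
    (hMN : ∀ i : ℤ, N (i + 1) + N i ≠ 0)
    (hMB : ∀ i : ℤ, B (i + 1) + B i ≠ 0)
    (hTv : ∀ i : ℤ, Tv i = ‖T (i + 1) + T i‖⁻¹ • (T (i + 1) + T i))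
    (hNv : ∀ i : ℤ, Nv i = ‖N (i + 1) + N i‖⁻¹ • (N (i + 1) + N i))
    (hBv : ∀ i : ℤ, Bv i = ‖B (i + 1) + B i‖⁻¹ • (B (i + 1) + B i))
    : ∀ i : ℤ,
      ‖Tv i‖ = 1 ∧ ‖Nv i‖ = 1 ∧ ‖Bv i‖ = 1 ∧
      ⟪Tv i, Nv i⟫ = 0 ∧ ⟪Tv i, Bv i⟫ = 0 ∧ ⟪Nv i, Bv i⟫ = 0 ∧
      Nv i = cross3 (Bv i) (Tv i) ∧
      (Matrix.of fun r c : Fin 3 => (![Tv i, Nv i, Bv i] c) r).det = 1 :=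
  vertex_frame_orthonormal_positively_oriented_general γ T N B hmid hT hBeven hBodd hN Tv Nv Bv hMT
    hMB hTv hNv hBv
end
end

section
/- Third discrete Frenet equation (inscribed case): for a discrete curve satisfying the positive-twist condition, for every i ∈ ℤ one has (DBᵉ)ᵢ = −τᵢ • Nᵛᵢ, where τᵢ := ‖(DBᵉ)ᵢ‖. -/
open RealInnerProductSpace

noncomputable section

/-!
For odd `i` the midpoint condition gives `Tᵉᵢ₊₁ = Tᵉᵢ =: t`, so `b₁ := Bᵉᵢ` and `b₂ := Bᵉᵢ₊₁` are
unit vectors orthogonal to `t`, and `(MNᵉ)ᵢ = (b₂ + b₁) × t`. The difference `b₂ - b₁` is orthogonal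
to both `b₂ + b₁` and `t`, hence parallel to `(b₂ + b₁) × t`; the proportionality factor has the
sign of `⟪b₂ - b₁, (b₂ + b₁) × t⟫ = 2 ⟪b₂, b₁ × t⟫ = 2 ⟪Bᵉᵢ₊₁, Nᵉᵢ⟫`, which the positive-twist
condition makes nonpositive. For even `i` both sides vanish since `Bᵉᵢ₊₁ = Bᵉᵢ`.
-/

open Matrix

lemma real_inner_eq_dotProduct {ι : Type*} [Fintype ι] (x y : EuclideanSpace ℝ ι) :
    ⟪x, y⟫ = x.ofLp ⬝ᵥ y.ofLp := by
  rw [EuclideanSpace.inner_eq_star_dotProduct, star_trivial, dotProduct_comm]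

lemma cross3_eq_crossProduct (u v : E3) : cross3 u v = WithLp.toLp 2 (u.ofLp ⨯₃ v.ofLp) := by
  rw [cross_apply]
  rfl

lemma cross3_add_left_s6 (a b c : E3) : cross3 (a + b) c = cross3 a c + cross3 b c := by
  simp only [cross3_eq_crossProduct, WithLp.ofLp_add, map_add, LinearMap.add_apply,
    WithLp.toLp_add]

lemma cross3_zero_left (a : E3) : cross3 0 a = 0 := by
  simp [cross3_eq_crossProduct]

lemma inner_self_cross3_s6 (a b : E3) : ⟪a, cross3 a b⟫ = 0 := by
  rw [cross3_eq_crossProduct, real_inner_eq_dotProduct, WithLp.ofLp_toLp, dot_self_cross]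

lemma inner_cross3_self_s6 (a b : E3) : ⟪b, cross3 a b⟫ = 0 := by
  rw [cross3_eq_crossProduct, real_inner_eq_dotProduct, WithLp.ofLp_toLp, dot_cross_self]

lemma inner_cross3_swap (a b c : E3) : ⟪a, cross3 b c⟫ = -⟪b, cross3 a c⟫ := by
  simp only [cross3_eq_crossProduct, real_inner_eq_dotProduct]
  rw [triple_product_permutation, ← cross_anticomm, dotProduct_neg]

lemma cross3_cross3 (a b c : E3) : cross3 a (cross3 b c) = ⟪a, c⟫ • b - ⟪a, b⟫ • c := by
  simp only [cross3_eq_crossProduct, real_inner_eq_dotProduct,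
    cross_cross_eq_smul_sub_smul', dotProduct_comm b.ofLp, WithLp.toLp_sub, WithLp.toLp_smul]

lemma cross3_cross3_left (a b c : E3) : cross3 (cross3 a b) c = ⟪a, c⟫ • b - ⟪b, c⟫ • a := by
  simp only [cross3_eq_crossProduct, real_inner_eq_dotProduct,
    cross_cross_eq_smul_sub_smul, WithLp.toLp_sub, WithLp.toLp_smul]

lemma eq_inner_div_smul_cross3 {d s t : E3} (hs : ⟪d, s⟫ = 0) (ht : ⟪d, t⟫ = 0)
    (hn : cross3 s t ≠ 0) :
    d = (⟪d, cross3 s t⟫ / ‖cross3 s t‖ ^ 2) • cross3 s t := by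
  set n := cross3 s t
  have hdn : cross3 d n = 0 := by
    rw [cross3_cross3, ht, hs, zero_smul, zero_smul, sub_zero]
  have key : ‖n‖ ^ 2 • d = ⟪d, n⟫ • n := by
    have h := cross3_cross3_left d n n
    rw [hdn, cross3_zero_left, real_inner_self_eq_norm_sq] at h
    exact (sub_eq_zero.mp h.symm).symm
  have hn2 : ‖n‖ ^ 2 ≠ 0 := by positivity
  rw [div_eq_inv_mul, mul_smul, ← key, smul_smul, inv_mul_cancel₀ hn2, one_smul]

lemma smul_eq_neg_norm_smul_inv_norm_smul {F : Type*} [NormedAddCommGroup F] [NormedSpace ℝ F]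
    {r : ℝ} {n : F} (hr : r ≤ 0) (hn : n ≠ 0) : r • n = -‖r • n‖ • (‖n‖⁻¹ • n) := by
  rw [norm_smul, Real.norm_of_nonpos hr, smul_smul]
  congr 1
  field_simp

lemma sub_eq_neg_norm_sub_smul_normalized_cross3 {b₁ b₂ t : E3} (hnorm : ‖b₁‖ = ‖b₂‖)
    (h₁ : ⟪b₁, t⟫ = 0) (h₂ : ⟪b₂, t⟫ = 0) (hn : cross3 (b₂ + b₁) t ≠ 0)
    (htwist : ⟪b₂, cross3 b₁ t⟫ ≤ 0) :
    b₂ - b₁ = -‖b₂ - b₁‖ • (‖cross3 (b₂ + b₁) t‖⁻¹ • cross3 (b₂ + b₁) t) := by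
  have hs : ⟪b₂ - b₁, b₂ + b₁⟫ = 0 := by
    rw [inner_sub_left, inner_add_right, inner_add_right, real_inner_self_eq_norm_sq,
      real_inner_self_eq_norm_sq, real_inner_comm b₁ b₂, hnorm]
    ring
  have ht : ⟪b₂ - b₁, t⟫ = 0 := by rw [inner_sub_left, h₁, h₂, sub_zero]
  have hsign : ⟪b₂ - b₁, cross3 (b₂ + b₁) t⟫ = 2 * ⟪b₂, cross3 b₁ t⟫ := by
    rw [cross3_add_left_s6, inner_sub_left, inner_add_right, inner_add_right, inner_self_cross3_s6,
      inner_self_cross3_s6, inner_cross3_swap b₁ b₂ t]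
    ring
  rw [eq_inner_div_smul_cross3 hs ht hn]
  refine smul_eq_neg_norm_smul_inv_norm_smul ?_ hn
  exact div_nonpos_of_nonpos_of_nonneg (by linarith) (sq_nonneg _)

lemma sub_eq_sub_of_eq_smul_add {V : Type*} [AddCommGroup V] [Module ℝ V] {x y z : V}
    (h : x = (2 : ℝ)⁻¹ • (y + z)) : y - x = x - z := by
  rw [h]
  module

theorem third_discrete_frenet_equation_general
    (γ T N B : ℤ → E3)
    (hmid : ∀ i : ℤ, Even i → γ i = (2 : ℝ)⁻¹ • (γ (i + 1) + γ (i - 1)))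
    (hT : ∀ i : ℤ, T i = γ (i + 1) - γ i)
    (hcross : ∀ i : ℤ, Even i → cross3 (T i) (T (i + 1)) ≠ 0)
    (hBeven : ∀ i : ℤ, Even i →
      B i = ‖cross3 (T i) (T (i + 1))‖⁻¹ • cross3 (T i) (T (i + 1)))
    (hBodd : ∀ i : ℤ, Odd i → B i = B (i - 1))
    (hN : ∀ i : ℤ, N i = cross3 (B i) (T i))
    (Nv : ℤ → E3)
    (hMN : ∀ i : ℤ, N (i + 1) + N i ≠ 0)
    (hNv : ∀ i : ℤ, Nv i = ‖N (i + 1) + N i‖⁻¹ • (N (i + 1) + N i))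
    (htwist : ∀ i : ℤ, Odd i → ⟪B (i + 1), N i⟫ ≤ 0)
    : ∀ i : ℤ, B (i + 1) - B i = -(‖B (i + 1) - B i‖) • Nv i := by
  intro i
  rcases Int.even_or_odd i with hi | hi
  · rw [hBodd (i + 1) hi.add_one, add_sub_cancel_right, sub_self, norm_zero, neg_zero, zero_smul]
  have hunit : ∀ j, Even j → ‖B j‖ = 1 := fun j hj => hBeven j hj ▸ norm_smul_inv_norm (hcross j hj)
  have hperp : ∀ j, Even j → ⟪B j, T j⟫ = 0 ∧ ⟪B j, T (j + 1)⟫ = 0 := fun j hj => by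
    rw [hBeven j hj, real_inner_smul_left, real_inner_smul_left, real_inner_comm (T j),
      real_inner_comm (T (j + 1)), inner_self_cross3_s6, inner_cross3_self_s6, mul_zero]
    exact ⟨rfl, rfl⟩
  have hTT : T (i + 1) = T i := by
    have h := hmid (i + 1) hi.add_one
    rw [add_sub_cancel_right] at h
    rw [hT, hT]
    exact sub_eq_sub_of_eq_smul_add h
  have hi' : Even (i - 1) := hi.sub_odd odd_one
  have hB₁ : ⟪B i, T i⟫ = 0 := by
    simpa only [← hBodd i hi, sub_add_cancel] using (hperp (i - 1) hi').2
  have hB₂ : ⟪B (i + 1), T i⟫ = 0 := hTT ▸ (hperp (i + 1) hi.add_one).1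
  have hn : N (i + 1) + N i = cross3 (B (i + 1) + B i) (T i) := by
    rw [hN, hN, hTT, cross3_add_left_s6]
  rw [hNv, hn]
  exact sub_eq_neg_norm_sub_smul_normalized_cross3
    ((hBodd i hi ▸ hunit (i - 1) hi').trans (hunit (i + 1) hi.add_one).symm) hB₁ hB₂
    (hn ▸ hMN i) (hN i ▸ htwist i hi)

/-- Third discrete Frenet equation (inscribed case): under the positive-twist condition,
`(DBᵉ)ᵢ = −τᵢ • Nᵛᵢ` with `τᵢ = ‖(DBᵉ)ᵢ‖`. -/
theorem third_discrete_frenet_equation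
    (γ T N B : ℤ → E3)
    (hlen : ∀ i : ℤ, ‖γ (i + 1) - γ i‖ = 1)
    (hmid : ∀ i : ℤ, Even i → γ i = (2 : ℝ)⁻¹ • (γ (i + 1) + γ (i - 1)))
    (hT : ∀ i : ℤ, T i = γ (i + 1) - γ i)
    (hcross : ∀ i : ℤ, Even i → cross3 (T i) (T (i + 1)) ≠ 0)
    (hBeven : ∀ i : ℤ, Even i →
      B i = ‖cross3 (T i) (T (i + 1))‖⁻¹ • cross3 (T i) (T (i + 1)))
    (hBodd : ∀ i : ℤ, Odd i → B i = B (i - 1))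
    (hN : ∀ i : ℤ, N i = cross3 (B i) (T i))
    (Tv Nv Bv : ℤ → E3)
    (hMT : ∀ i : ℤ, T (i + 1) + T i ≠ 0)
    (hMN : ∀ i : ℤ, N (i + 1) + N i ≠ 0)
    (hMB : ∀ i : ℤ, B (i + 1) + B i ≠ 0)
    (hTv : ∀ i : ℤ, Tv i = ‖T (i + 1) + T i‖⁻¹ • (T (i + 1) + T i))
    (hNv : ∀ i : ℤ, Nv i = ‖N (i + 1) + N i‖⁻¹ • (N (i + 1) + N i))
    (hBv : ∀ i : ℤ, Bv i = ‖B (i + 1) + B i‖⁻¹ • (B (i + 1) + B i))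
    (htwist : ∀ i : ℤ, Odd i → ⟪B (i + 1), N i⟫ ≤ 0)
    : ∀ i : ℤ, B (i + 1) - B i = -(‖B (i + 1) - B i‖) • Nv i :=
  third_discrete_frenet_equation_general γ T N B hmid hT hcross hBeven hBodd hN Nv hMN hNv htwist
end
end
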